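/- arXiv:2305.03367 — 3 statements merged into one kernel-verified Lean document; each statement's English description precedes it below -/
import Mathlib

section
/- Let α be a measure on ℝ, n < m, z_1,...,z_n ∈ ℝ, and B_1,...,B_N a measurable partition of ℝ. Set c_k := (δ_{z_1}+...+δ_{z_n})(B_k). For indices i_{n+1},...,i_m ∈ {1,...,N}, set e_k := #{l : i_l = k}. Then the integral of the indicator of B_{i_{n+1}} × ... × B_{i_m} with respect to the kernel κ_{m,n}(z_1,...,z_n, ·) equals ∏_{k=1}^N (α(B_k) + c_k)^{(e_k)}, a product of rising factorials. -/
open Finset MeasureTheory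
open scoped ENNReal

/-- The measure `α + δ_{x_1} + ⋯ + δ_{x_j}` attached to a list of already-placed points. -/
noncomputable def stepMeasure (α : Measure ℝ) (l : List ℝ) : Measure ℝ :=
  α + (l.map Measure.dirac).sum

/-- Iterated integral of a product of indicators against the kernel
`κ_{m,n}((z_1,…,z_n), d(y_{n+1},…,y_m))
  = (α+δ_{z}+δ_{y_{n+1}}+⋯+δ_{y_{m-1}})(dy_m) ⋯ (α+δ_{z_1}+⋯+δ_{z_n})(dy_{n+1})`:
`kappaInt α l [B_{n+1},…,B_m]` integrates the indicator of `B_{n+1} × ⋯ × B_m`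
against this kernel, the list `l` recording the points already placed. -/
noncomputable def kappaInt (α : Measure ℝ) : List ℝ → List (Set ℝ) → ℝ≥0∞
  | _, [] => 1
  | l, B :: Bs => ∫⁻ y in B, kappaInt α (l ++ [y]) Bs ∂(stepMeasure α l)

/-- Rising factorial `a(a+1)⋯(a+e-1)` in `ℝ≥0∞`. -/
noncomputable def risingENN (a : ℝ≥0∞) (e : ℕ) : ℝ≥0∞ :=
  ∏ j ∈ Finset.range e, (a + j)

lemma risingENN_succ (a : ℝ≥0∞) (e : ℕ) : risingENN a (e + 1) = a * risingENN (a + 1) e := by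
  rw [risingENN, Finset.prod_range_succ']
  simp only [Nat.cast_zero, add_zero]
  rw [mul_comm, risingENN]
  congr 1
  refine Finset.prod_congr rfl fun j _ => ?_
  push_cast
  ring

open Classical in
lemma listSum_dirac_apply (l : List ℝ) {s : Set ℝ} (hs : MeasurableSet s) :
    (l.map Measure.dirac).sum s = (l.countP fun x => decide (x ∈ s) : ℕ) := by
  induction l with
  | nil => simp
  | cons a l ih =>
    simp only [List.map_cons, List.sum_cons, Measure.add_apply, ih,
      Measure.dirac_apply' _ hs, List.countP_cons, Set.indicator_apply]
    by_cases h : a ∈ s <;> simp [h, add_comm]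

open Classical in
lemma stepMeasure_apply (α : Measure ℝ) (l : List ℝ) {s : Set ℝ} (hs : MeasurableSet s) :
    stepMeasure α l s = α s + (l.countP fun x => decide (x ∈ s) : ℕ) := by
  rw [stepMeasure, Measure.add_apply, listSum_dirac_apply l hs]

open Classical in
lemma kappaInt_eq (α : Measure ℝ) {N : ℕ} (B : Fin N → Set ℝ)
    (hmeas : ∀ k, MeasurableSet (B k))
    (hdisj : Pairwise (Function.onFun Disjoint B)) :
    ∀ (is : List (Fin N)) (l : List ℝ),
      kappaInt α l (is.map B) =
        ∏ k, risingENN (α (B k) + (l.countP fun x => decide (x ∈ B k) : ℕ)) (is.count k)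
  | [], l => by simp [kappaInt, risingENN]
  | i0 :: is, l => by
    have hconst : ∀ y ∈ B i0, kappaInt α (l ++ [y]) (is.map B) =
        ∏ k, risingENN (α (B k) + (l.countP fun x => decide (x ∈ B k) : ℕ)
          + (if k = i0 then 1 else 0)) (is.count k) := by
      intro y hy
      rw [kappaInt_eq α B hmeas hdisj is (l ++ [y])]
      refine Finset.prod_congr rfl fun k _ => ?_
      congr 1
      rw [List.countP_append]
      by_cases hk : k = i0
      · subst hk
        simp [hy, add_assoc]
      · have hy' : y ∉ B k := fun h => Set.disjoint_left.mp (hdisj hk) h hy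
        simp [hy', hk]
    rw [List.map_cons, kappaInt,
      setLIntegral_congr_fun (hmeas i0) (fun y hy => hconst y hy),
      setLIntegral_const, stepMeasure_apply α l (hmeas i0),
      Fintype.prod_eq_mul_prod_compl i0, Fintype.prod_eq_mul_prod_compl i0]
    have hrest : (∏ k ∈ ({i0} : Finset (Fin N))ᶜ,
        risingENN (α (B k) + (l.countP fun x => decide (x ∈ B k) : ℕ)
          + (if k = i0 then 1 else 0)) (is.count k))
        = ∏ k ∈ ({i0} : Finset (Fin N))ᶜ,
        risingENN (α (B k) + (l.countP fun x => decide (x ∈ B k) : ℕ))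
          ((i0 :: is).count k) := by
      refine Finset.prod_congr rfl fun k hk => ?_
      have hk' : k ≠ i0 := by simpa using hk
      simp [hk', List.count_cons, Ne.symm hk']
    rw [hrest]
    simp only [List.count_cons, beq_self_eq_true, if_true]
    rw [risingENN_succ]
    ring

open Classical in
theorem countP_ofFn' {n : ℕ} {α : Type} (z : Fin n → α) (p : α → Bool) :
    (List.ofFn z).countP p = (Finset.univ.filter fun j => p (z j)).card := by
  induction n with
  | zero => simp
  | succ n ih =>
    rw [List.ofFn_succ, List.countP_cons, Finset.card_filter, Fin.sum_univ_succ,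
      ← Finset.card_filter, ih (fun i => z i.succ)]
    exact Nat.add_comm _ _

/-- for a measurable partition `B_1,…,B_N` of `ℝ`, points `z_1,…,z_n`, and
indices `i_{n+1},…,i_m`, the κ_{m,n}-integral of the indicator of
`B_{i_{n+1}} × ⋯ × B_{i_m}` equals `∏_k (α(B_k) + c_k)^{(e_k)}` where
`c_k = #{j : z_j ∈ B_k}` and `e_k = #{l : i_l = k}`. -/
theorem kappa_integral_of_rectangle (α : Measure ℝ) (n m N : ℕ) (hnm : n < m)
    (z : Fin n → ℝ) (B : Fin N → Set ℝ)
    (hmeas : ∀ k, MeasurableSet (B k))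
    (hdisj : Pairwise (Function.onFun Disjoint B))
    (hcover : (⋃ k, B k) = Set.univ)
    (i : Fin (m - n) → Fin N) :
    kappaInt α (List.ofFn z) (List.ofFn (fun l => B (i l)))
      = ∏ k, risingENN (α (B k) + ({j : Fin n | z j ∈ B k}.ncard : ℝ≥0∞))
          ({l : Fin (m - n) | i l = k}.ncard) := by
  classical
  have h1 : List.ofFn (fun l => B (i l)) = (List.ofFn i).map B := by
    rw [List.map_ofFn]; rfl
  rw [h1, kappaInt_eq α B hmeas hdisj (List.ofFn i) (List.ofFn z)]
  refine Finset.prod_congr rfl fun k _ => ?_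
  have hc : (List.ofFn z).countP (fun x => decide (x ∈ B k))
      = {j : Fin n | z j ∈ B k}.ncard := by
    rw [countP_ofFn', Set.ncard_eq_toFinset_card', Set.toFinset_setOf]
    simp
  have he : (List.ofFn i).count k = {l : Fin (m - n) | i l = k}.ncard := by
    rw [List.count, countP_ofFn', Set.ncard_eq_toFinset_card', Set.toFinset_setOf]
    simp
  rw [hc, he]
end

section
/- The measure λ_n := κ_{n,0} on ℝ^n built from a measure α satisfies λ_n = λ_k ⊗ κ_{n,k} for all 0 ≤ k ≤ n, i.e., ∫ f dλ_n = ∫∫ f(x_1,...,x_k,y_{k+1},...,y_n) κ_{n,k}((x_1,...,x_k), d(y_{k+1},...,y_n)) λ_k(d(x_1,...,x_k)) for all measurable nonnegative f. -/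
open Finset MeasureTheory
open scoped ENNReal

/-- `kappaLInt α r l f` is the iterated integral of `f` against the kernel
`κ_{|l|+r,|l|}(l, ·)` of the paper; with `l = []` and `r = n` this is the integral
against `λ_n = κ_{n,0}`. -/
noncomputable def kappaLInt (α : Measure ℝ) : ℕ → List ℝ → (List ℝ → ℝ≥0∞) → ℝ≥0∞
  | 0, l, f => f l
  | r + 1, l, f => ∫⁻ y, kappaLInt α r (l ++ [y]) f ∂(stepMeasure α l)

lemma kappaLInt_add (α : Measure ℝ) (a b : ℕ) (l : List ℝ) (f : List ℝ → ℝ≥0∞) :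
    kappaLInt α (a + b) l f = kappaLInt α a l (fun zs => kappaLInt α b zs f) := by
  induction a generalizing l with
  | zero => simp [kappaLInt]
  | succ a ih =>
    have h : a + 1 + b = (a + b) + 1 := by omega
    rw [h]
    simp only [kappaLInt]
    exact lintegral_congr fun y => ih (l ++ [y])

/-- `λ_n = λ_k ⊗ κ_{n,k}` for `0 ≤ k ≤ n`: the `λ_n`-integral of a
measurable nonnegative function `f` equals the iterated integral, first against the
kernel `κ_{n,k}((x_1,…,x_k),·)` in the last `n-k` variables and then against `λ_k` in
the first `k` variables. -/
theorem lambda_n_eq_lambda_k_otimes_kappa (α : Measure ℝ) [SigmaFinite α]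
    (n k : ℕ) (hk : k ≤ n)
    (f : (Fin n → ℝ) → ℝ≥0∞) (hf : Measurable f) :
    kappaLInt α n []
        (fun ys => if h : ys.length = n then f (fun i => ys.get (Fin.cast h.symm i)) else 0)
      = kappaLInt α k []
          (fun zs => kappaLInt α (n - k) zs
            (fun ys => if h : ys.length = n then f (fun i => ys.get (Fin.cast h.symm i))
              else 0)) := by
  have := kappaLInt_add α k (n - k) []
    (fun ys => if h : ys.length = n then f (fun i => ys.get (Fin.cast h.symm i)) else 0)
  rwa [Nat.add_sub_cancel' hk] at this
end

section
/- For the monic Meixner polynomials M_n^{p,α}(x) = ∑_{k=0}^n C(n,k) (1 − 1/p)^{k−n} (α+k)^{(n−k)} (x)_k with parameters α > 0 and 0 < p < 1, if X follows the negative binomial distribution with parameters p and α, then E[M_n^{p,α}(X) · M_m^{p,α}(X)] = 0 for n ≠ m. -/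
open Finset

/-- Rising factorial `a(a+1)⋯(a+k-1)` for real `a`. -/
noncomputable def risingReal (a : ℝ) (k : ℕ) : ℝ :=
  ∏ j ∈ Finset.range k, (a + j)

/-- The monic univariate Meixner polynomial
`M_n^{p,α}(x) = ∑_{k=0}^n C(n,k) (1-1/p)^{k-n} (α+k)^{(n-k)} (x)_k`. -/
noncomputable def meixner (p α : ℝ) (n : ℕ) (x : ℕ) : ℝ :=
  ∑ k ∈ Finset.range (n + 1),
    (n.choose k : ℝ) * (1 - 1 / p) ^ ((k : ℤ) - (n : ℤ)) *
      risingReal (α + k) (n - k) * (x.descFactorial k : ℝ)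

noncomputable def fallingReal (y : ℝ) (k : ℕ) : ℝ :=
  ∏ t ∈ Finset.range k, (y - t)





lemma risingReal_zero (a : ℝ) : risingReal a 0 = 1 := by simp [risingReal]

lemma risingReal_succ (a : ℝ) (k : ℕ) :
    risingReal a (k + 1) = risingReal a k * (a + k) := by
  simp [risingReal, Finset.prod_range_succ]

lemma risingReal_succ' (a : ℝ) (k : ℕ) :
    risingReal a (k + 1) = a * risingReal (a + 1) k := by
  unfold risingReal
  rw [Finset.prod_range_succ']
  simp only [Nat.cast_zero, add_zero, Nat.cast_add, Nat.cast_one]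
  rw [mul_comm]
  congr 1
  apply Finset.prod_congr rfl
  intro j _
  push_cast
  ring

lemma risingReal_add (a : ℝ) (x s : ℕ) :
    risingReal a (x + s) = risingReal a x * risingReal (a + x) s := by
  unfold risingReal
  rw [Finset.prod_range_add]
  congr 1
  apply Finset.prod_congr rfl
  intro j _
  push_cast
  ring

lemma fallingReal_zero (y : ℝ) : fallingReal y 0 = 1 := by simp [fallingReal]

lemma fallingReal_succ (y : ℝ) (k : ℕ) :
    fallingReal y (k + 1) = fallingReal y k * (y - k) := by
  simp [fallingReal, Finset.prod_range_succ]

lemma fallingReal_add (y : ℝ) (i j : ℕ) :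
    fallingReal y (i + j) = fallingReal y i * fallingReal (y - i) j := by
  unfold fallingReal
  rw [Finset.prod_range_add]
  congr 1
  apply Finset.prod_congr rfl
  intro t _
  push_cast
  ring

lemma cast_descFactorial (x k : ℕ) :
    ((x.descFactorial k : ℕ) : ℝ) = fallingReal (x : ℝ) k := by
  induction k with
  | zero => simp [fallingReal]
  | succ k ih =>
    rw [Nat.descFactorial_succ, fallingReal_succ, ← ih]
    rcases le_or_gt k x with h | h
    · push_cast [h]
      ring
    · rw [Nat.descFactorial_eq_zero_iff_lt.2 h]
      simp


lemma vandermondeR : ∀ (N : ℕ) (β y : ℝ),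
    ∑ j ∈ Finset.range (N + 1),
      (N.choose j : ℝ) * risingReal (β + j) (N - j) * fallingReal y j
      = risingReal (β + y) N := by
  intro N
  induction N with
  | zero => intro β y; simp [risingReal, fallingReal]
  | succ N ih =>
    intro β y
    have key : risingReal (β + y) (N + 1)
        = ∑ j ∈ Finset.range (N + 1),
            (N.choose j : ℝ) * risingReal (β + j) (N + 1 - j) * fallingReal y j
          + ∑ j ∈ Finset.range (N + 1),
            (N.choose j : ℝ) * risingReal (β + (j + 1)) (N - j) * fallingReal y (j + 1) := by
      have h1 : risingReal (β + y) (N + 1) = (β + y) * risingReal (β + y + 1) N := by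
        rw [risingReal_succ']
      have h2 := ih (β + 1) y
      have h3 : risingReal ((β + 1) + y) N = risingReal (β + y + 1) N := by ring_nf
      rw [h1, ← h3, ← h2, Finset.mul_sum, ← Finset.sum_add_distrib]
      apply Finset.sum_congr rfl
      intro j hj
      simp only [Finset.mem_range] at hj
      have hjN : j ≤ N := Nat.lt_succ_iff.1 hj
      have e1 : risingReal (β + j) (N + 1 - j) = (β + j) * risingReal (β + (j + 1)) (N - j) := by
        rw [show N + 1 - j = (N - j) + 1 by omega, risingReal_succ']
        push_cast
        ring_nf
      have e2 : fallingReal y (j + 1) = fallingReal y j * (y - j) := fallingReal_succ y j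
      have e3 : (β + 1 + (j : ℝ)) = β + ((j : ℝ) + 1) := by ring
      rw [e1, e2, e3]
      ring
    -- now LHS of goal equals the two sums
    rw [key]
    -- expand goal's LHS via Pascal
    rw [Finset.sum_range_succ' (fun j => ((N + 1).choose j : ℝ) * risingReal (β + j) (N + 1 - j) * fallingReal y j)]
    simp only [Nat.choose_succ_succ, Nat.cast_add, Nat.choose_zero_right, Nat.cast_one]
    have expand : ∀ j ∈ Finset.range (N + 1),
        ((N.choose j : ℝ) + (N.choose (j+1) : ℝ)) * risingReal (β + (j+1)) (N + 1 - (j+1)) * fallingReal y (j+1)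
        = (N.choose j : ℝ) * risingReal (β + (j + 1)) (N - j) * fallingReal y (j + 1)
          + (N.choose (j+1) : ℝ) * risingReal (β + (j+1)) (N - j) * fallingReal y (j+1) := by
      intro j hj
      have : N + 1 - (j + 1) = N - j := by omega
      rw [this]; ring
    rw [Finset.sum_congr rfl expand, Finset.sum_add_distrib]
    have tail : ∑ j ∈ Finset.range (N + 1), ((N.choose (j+1) : ℝ)) * risingReal (β + (j+1)) (N - j) * fallingReal y (j+1)
        + (1 : ℝ) * risingReal (β + (0:ℕ)) (N + 1 - 0) * fallingReal y 0
        = ∑ j ∈ Finset.range (N + 1), (N.choose j : ℝ) * risingReal (β + j) (N + 1 - j) * fallingReal y j := by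
      rw [Finset.sum_range_succ' (fun j => (N.choose j : ℝ) * risingReal (β + j) (N + 1 - j) * fallingReal y j)]
      congr 1
      · rw [Finset.sum_range_succ]
        simp only [Nat.choose_succ_self, Nat.cast_zero, zero_mul]
        rw [add_zero]
        apply Finset.sum_congr rfl
        intro j hj
        have h1 : N + 1 - (j + 1) = N - j := by omega
        rw [h1]
        push_cast
        ring
      · simp
    rw [add_assoc, tail]
    ring


lemma meixner_mul (p α : ℝ) (hc : (1:ℝ) - 1/p ≠ 0) (n x : ℕ) :
    (1 - 1/p) ^ n * meixner p α n x
      = ∑ i ∈ Finset.range (n + 1),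
          (n.choose i : ℝ) * (-1/p) ^ i * fallingReal x i * risingReal (α + x) (n - i) := by
  have step1 : (1 - 1/p) ^ n * meixner p α n x
      = ∑ k ∈ Finset.range (n + 1),
          (n.choose k : ℝ) * (1 - 1/p) ^ k * risingReal (α + k) (n - k) * fallingReal x k := by
    unfold meixner
    rw [Finset.mul_sum]
    refine Finset.sum_congr rfl fun k _ => ?_
    rw [cast_descFactorial, zpow_sub₀ hc, zpow_natCast, zpow_natCast]
    field_simp
  have step2 : ∀ k ∈ Finset.range (n + 1), ((1:ℝ) - 1/p) ^ k
      = ∑ i ∈ Finset.range (n + 1), (k.choose i : ℝ) * (-1/p) ^ i := by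
    intro k hk
    simp only [Finset.mem_range] at hk
    have h1 : ((1:ℝ) - 1/p) = (-1/p) + 1 := by ring
    rw [h1, add_pow]
    simp only [one_pow, mul_one]
    rw [Finset.sum_subset (Finset.range_subset_range.2 hk)]
    · refine Finset.sum_congr rfl fun i _ => by ring
    · intro i _ hi
      simp only [Finset.mem_range, not_lt] at hi
      rw [Nat.choose_eq_zero_of_lt (by omega)]
      simp
  rw [step1, Finset.sum_congr rfl fun k hk => by rw [step2 k hk]]
  have step3 : ∑ k ∈ Finset.range (n + 1),
      (n.choose k : ℝ) * (∑ i ∈ Finset.range (n + 1), (k.choose i : ℝ) * (-1/p) ^ i) *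
        risingReal (α + k) (n - k) * fallingReal x k
      = ∑ i ∈ Finset.range (n + 1), ∑ k ∈ Finset.range (n + 1),
          (n.choose k : ℝ) * (k.choose i : ℝ) * (-1/p) ^ i *
            risingReal (α + k) (n - k) * fallingReal x k := by
    rw [Finset.sum_comm]
    refine Finset.sum_congr rfl fun k _ => ?_
    simp only [Finset.mul_sum, Finset.sum_mul]
    exact Finset.sum_congr rfl fun i _ => by ring
  rw [step3]
  refine Finset.sum_congr rfl fun i hi => ?_
  simp only [Finset.mem_range] at hi
  have hin : i ≤ n := by omega
  have hsplit : n + 1 = i + ((n - i) + 1) := by omega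
  rw [show Finset.range (n+1) = Finset.range (i + ((n-i)+1)) by rw [← hsplit]]
  rw [Finset.sum_range_add]
  have hzero : ∑ k ∈ Finset.range i,
      (n.choose k : ℝ) * (k.choose i : ℝ) * (-1/p) ^ i *
        risingReal (α + k) (n - k) * fallingReal x k = 0 := by
    refine Finset.sum_eq_zero fun k hk => ?_
    simp only [Finset.mem_range] at hk
    rw [Nat.choose_eq_zero_of_lt hk]
    simp
  rw [hzero, zero_add]
  have hterm : ∀ j ∈ Finset.range ((n - i) + 1),
      (n.choose (i + j) : ℝ) * ((i + j).choose i : ℝ) * (-1/p) ^ i *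
        risingReal (α + (i + j : ℕ)) (n - (i + j)) * fallingReal x (i + j)
      = ((n.choose i : ℝ) * (-1/p) ^ i * fallingReal x i) *
          (((n - i).choose j : ℝ) * risingReal ((α + i) + j) ((n - i) - j) *
            fallingReal ((x : ℝ) - i) j) := by
    intro j hj
    simp only [Finset.mem_range] at hj
    have hjn : i + j ≤ n := by omega
    have hcm : (n.choose (i + j) : ℝ) * ((i + j).choose i : ℝ)
        = (n.choose i : ℝ) * ((n - i).choose j : ℝ) := by
      have hij : i + j - i = j := by omega
      rw [← Nat.cast_mul, ← Nat.cast_mul, Nat.choose_mul (Nat.le_add_right i j), hij]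
    have hr : risingReal (α + (i + j : ℕ)) (n - (i + j)) = risingReal ((α + i) + j) ((n - i) - j) := by
      congr 1
      · push_cast; ring
      · omega
    rw [hcm, hr, fallingReal_add]
    ring
  rw [Finset.sum_congr rfl hterm, ← Finset.mul_sum, vandermondeR ((n-i)) (α + i) ((x:ℝ) - i)]
  have : (α + (i:ℝ)) + ((x:ℝ) - i) = α + x := by ring
  rw [this]


lemma weight_mul_meixner (p α : ℝ) (hp0 : p ≠ 0) (hc : (1:ℝ) - 1/p ≠ 0) (m x : ℕ) :
    (risingReal α x * p ^ x * (1 - p) ^ α / (Nat.factorial x : ℝ)) * meixner p α m x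
      = ((1 - 1/p) ^ m)⁻¹ * risingReal α m * (1 - p) ^ α *
          ∑ i ∈ Finset.range (m + 1), (-1 : ℝ) ^ i * (m.choose i : ℝ) *
            (if i ≤ x then risingReal (α + m) (x - i) * p ^ (x - i) / (Nat.factorial (x - i) : ℝ)
             else 0) := by
  have hcm : ((1:ℝ) - 1/p) ^ m ≠ 0 := pow_ne_zero _ hc
  have hme : meixner p α m x = ((1 - 1/p) ^ m)⁻¹ *
      ∑ i ∈ Finset.range (m + 1),
        (m.choose i : ℝ) * (-1/p) ^ i * fallingReal x i * risingReal (α + x) (m - i) := by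
    rw [← meixner_mul p α hc m x, ← mul_assoc, inv_mul_cancel₀ hcm, one_mul]
  rw [hme]
  rw [Finset.mul_sum, Finset.mul_sum, Finset.mul_sum]
  refine Finset.sum_congr rfl fun i hi => ?_
  simp only [Finset.mem_range] at hi
  have him : i ≤ m := by omega
  by_cases hix : i ≤ x
  · rw [if_pos hix]
    have hF : fallingReal (x : ℝ) i = (x.descFactorial i : ℝ) := (cast_descFactorial x i).symm
    have hfac : (Nat.factorial x : ℝ) = (Nat.factorial (x - i) : ℝ) * (x.descFactorial i : ℝ) := by
      rw [← Nat.cast_mul, Nat.factorial_mul_descFactorial hix]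
    have hrise : risingReal α x * risingReal (α + x) (m - i)
        = risingReal α m * risingReal (α + m) (x - i) := by
      rw [← risingReal_add, ← risingReal_add]
      congr 1
      omega
    have hpow : p ^ x = p ^ (x - i) * p ^ i := by
      rw [← pow_add]
      congr 1
      omega
    have hsign : (-1/p : ℝ) ^ i * p ^ i = (-1 : ℝ) ^ i := by
      rw [← mul_pow]
      congr 1
      field_simp
    have hd : (x.descFactorial i : ℝ) ≠ 0 := by
      rw [Ne, Nat.cast_eq_zero, Nat.descFactorial_eq_zero_iff_lt]
      omega
    have hfx : (Nat.factorial (x - i) : ℝ) ≠ 0 := by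
      exact_mod_cast (Nat.factorial_pos (x - i)).ne'
    have expand : risingReal α x * p ^ x * (1 - p) ^ α / (Nat.factorial x : ℝ) *
        (((1 - 1/p) ^ m)⁻¹ *
          ((m.choose i : ℝ) * (-1/p) ^ i * fallingReal (x:ℝ) i * risingReal (α + x) (m - i)))
        = ((1 - 1/p) ^ m)⁻¹ * (1 - p) ^ α * (m.choose i : ℝ) *
          ((risingReal α x * risingReal (α + (x:ℕ)) (m - i)) * (p ^ (x - i) * ((-1/p) ^ i * p ^ i)) *
            ((x.descFactorial i : ℝ) / ((x.descFactorial i : ℝ) * (Nat.factorial (x - i) : ℝ)))) := by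
      rw [hF, hfac, hpow]
      ring
    rw [expand, hrise, hsign]
    rw [div_mul_eq_div_div, div_self hd]
    ring
  · rw [if_neg hix]
    have : fallingReal (x : ℝ) i = 0 := by
      rw [← cast_descFactorial]
      rw [Nat.descFactorial_eq_zero_iff_lt.2 (by omega)]
      simp
    rw [this]
    simp


lemma descFactorial_diff (y k : ℕ) :
    (((y + 1).descFactorial (k + 1) : ℕ) : ℝ)
      = (y.descFactorial (k + 1) : ℝ) + (k + 1) * (y.descFactorial k : ℝ) := by
  rcases le_or_gt k y with h | h
  · rw [Nat.succ_descFactorial_succ, Nat.descFactorial_succ]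
    push_cast [h]
    ring
  · rw [Nat.descFactorial_eq_zero_iff_lt.2 h,
      Nat.descFactorial_eq_zero_iff_lt.2 (by omega : y < k + 1),
      Nat.succ_descFactorial_succ, Nat.descFactorial_eq_zero_iff_lt.2 h]
    simp

lemma alt_split (m : ℕ) (g : ℕ → ℝ) :
    ∑ i ∈ Finset.range (m + 2), (-1 : ℝ) ^ i * ((m + 1).choose i : ℝ) * g i
      = ∑ i ∈ Finset.range (m + 1), (-1 : ℝ) ^ i * (m.choose i : ℝ) * (g i - g (i + 1)) := by
  have peel : ∑ i ∈ Finset.range (m + 2), (-1 : ℝ) ^ i * ((m + 1).choose i : ℝ) * g i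
      = (∑ i ∈ Finset.range (m + 1), (-1 : ℝ) ^ (i+1) * ((m + 1).choose (i+1) : ℝ) * g (i+1))
        + g 0 := by
    rw [Finset.sum_range_succ' (fun i => (-1 : ℝ) ^ i * ((m + 1).choose i : ℝ) * g i)]
    simp
  rw [peel]
  have expand : ∀ i ∈ Finset.range (m + 1),
      (-1 : ℝ) ^ (i+1) * ((m + 1).choose (i+1) : ℝ) * g (i+1)
        = -((-1 : ℝ) ^ i * (m.choose i : ℝ) * g (i+1))
          + (-1 : ℝ) ^ (i+1) * (m.choose (i+1) : ℝ) * g (i+1) := by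
    intro i _
    rw [Nat.choose_succ_succ]
    push_cast
    ring
  rw [Finset.sum_congr rfl expand, Finset.sum_add_distrib]
  have second : ∑ i ∈ Finset.range (m + 1), (-1 : ℝ) ^ (i+1) * (m.choose (i+1) : ℝ) * g (i+1)
      = (∑ i ∈ Finset.range (m + 1), (-1 : ℝ) ^ i * (m.choose i : ℝ) * g i) - g 0 := by
    have full : ∑ i ∈ Finset.range (m + 2), (-1 : ℝ) ^ i * (m.choose i : ℝ) * g i
        = (∑ i ∈ Finset.range (m + 1), (-1 : ℝ) ^ (i+1) * (m.choose (i+1) : ℝ) * g (i+1))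
          + g 0 := by
      rw [Finset.sum_range_succ' (fun i => (-1 : ℝ) ^ i * (m.choose i : ℝ) * g i)]
      simp
    have drop : ∑ i ∈ Finset.range (m + 2), (-1 : ℝ) ^ i * (m.choose i : ℝ) * g i
        = ∑ i ∈ Finset.range (m + 1), (-1 : ℝ) ^ i * (m.choose i : ℝ) * g i := by
      rw [Finset.sum_range_succ, Nat.choose_succ_self]
      simp
    -- combine: ∑_{range(m+1)} = second + g 0  where also ∑_{range(m+1)} = ∑ (-1)^i C(m,i) g i
    have := full.symm.trans drop
    linarith [this]
  rw [second]
  simp only [mul_sub, Finset.sum_sub_distrib, Finset.sum_neg_distrib]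
  ring

lemma alt_desc_zero : ∀ (m k y : ℕ), k < m →
    ∑ i ∈ Finset.range (m + 1), (-1 : ℝ) ^ i * (m.choose i : ℝ) * (((y + i).descFactorial k : ℕ) : ℝ) = 0 := by
  intro m
  induction m with
  | zero => intro k y hk; omega
  | succ m ih =>
    intro k y hk
    rw [alt_split m (fun i => (((y + i).descFactorial k : ℕ) : ℝ))]
    rcases k with _ | k'
    · simp only [Nat.descFactorial_zero, Nat.cast_one, sub_self, mul_zero]
      simp
    · have diff : ∀ i ∈ Finset.range (m + 1),
          (-1 : ℝ) ^ i * (m.choose i : ℝ) *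
            ((((y + i).descFactorial (k' + 1) : ℕ) : ℝ) - (((y + (i+1)).descFactorial (k' + 1) : ℕ) : ℝ))
          = -((k' : ℝ) + 1) * ((-1 : ℝ) ^ i * (m.choose i : ℝ) * (((y + i).descFactorial k' : ℕ) : ℝ)) := by
        intro i _
        have : y + (i + 1) = (y + i) + 1 := by omega
        rw [this, descFactorial_diff (y + i) k']
        ring
      rw [Finset.sum_congr rfl diff, ← Finset.mul_sum, ih k' y (by omega)]
      ring


lemma risingReal_nonneg {a : ℝ} (ha : 0 ≤ a) (k : ℕ) : 0 ≤ risingReal a k :=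
  Finset.prod_nonneg fun j _ => by positivity

lemma risingReal_le {a b : ℝ} (ha : 0 ≤ a) (hab : a ≤ b) (k : ℕ) :
    risingReal a k ≤ risingReal b k :=
  Finset.prod_le_prod (fun j _ => by positivity) (fun j _ => by linarith)

lemma risingReal_natCast (B k : ℕ) :
    risingReal (B : ℝ) k = ((B.ascFactorial k : ℕ) : ℝ) := by
  induction k with
  | zero => simp [risingReal]
  | succ k ih => rw [risingReal_succ, Nat.ascFactorial_succ, ih]; push_cast; ring

lemma summable_majorant {p : ℝ} (hp0 : 0 < p) (hp1 : p < 1) (D M : ℕ) :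
    Summable (fun y : ℕ => (((y + D : ℕ) : ℝ)) ^ M * p ^ y) := by
  have h0 : Summable (fun n : ℕ => ((n : ℝ)) ^ M * p ^ n) :=
    summable_pow_mul_geometric_of_norm_lt_one M
      (by rw [Real.norm_eq_abs, abs_of_pos hp0]; exact hp1)
  have h1 : Summable (fun y : ℕ => (((y + D : ℕ) : ℝ)) ^ M * p ^ (y + D)) :=
    (summable_nat_add_iff D).2 h0
  have h2 := h1.mul_left ((p ^ D)⁻¹)
  refine h2.congr fun y => ?_
  rw [pow_add]
  field_simp

lemma summable_aux' {p : ℝ} (hp0 : 0 < p) (hp1 : p < 1) {β : ℝ} (hβ : 0 < β)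
    (B : ℕ) (hβB : β ≤ (B : ℝ)) (hB1 : 1 ≤ B) (i k : ℕ) :
    Summable (fun y : ℕ =>
      risingReal β y * p ^ y / (Nat.factorial y : ℝ) * (((y + i).descFactorial k : ℕ) : ℝ)) := by
  have hmaj : Summable (fun y : ℕ => (((y + (B + i) : ℕ) : ℝ)) ^ (B + k) * p ^ y) :=
    summable_majorant hp0 hp1 (B + i) (B + k)
  refine Summable.of_nonneg_of_le (fun y => ?_) (fun y => ?_) hmaj
  · have h1 : 0 ≤ risingReal β y := risingReal_nonneg hβ.le y
    positivity
  · have hfac : (0:ℝ) < (Nat.factorial y : ℝ) := by exact_mod_cast Nat.factorial_pos y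
    have hr1 : risingReal β y ≤ ((B.ascFactorial y : ℕ) : ℝ) := by
      rw [← risingReal_natCast]
      exact risingReal_le hβ.le hβB y
    -- ascFactorial / y! = choose (B + y - 1) y
    have hasc : B.ascFactorial y = Nat.factorial y * (B + y - 1).choose y :=
      Nat.ascFactorial_eq_factorial_mul_choose' B y
    have hsym : (B + y - 1).choose y = (B + y - 1).choose (B - 1) := by
      have h : B + y - 1 - y = B - 1 := by omega
      rw [← h, Nat.choose_symm (by omega)]
    have hprod : (B + y - 1).choose y * (y + i).descFactorial k ≤ (y + (B + i)) ^ (B + k) := by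
      calc (B + y - 1).choose y * (y + i).descFactorial k
          ≤ (y + (B + i)) ^ (B - 1) * (y + (B + i)) ^ k := by
            refine Nat.mul_le_mul ?_ ?_
            · rw [hsym]
              exact (Nat.choose_le_pow _ _).trans (Nat.pow_le_pow_left (by omega) _)
            · exact (Nat.descFactorial_le_pow _ _).trans (Nat.pow_le_pow_left (by omega) _)
        _ = (y + (B + i)) ^ (B - 1 + k) := (pow_add _ _ _).symm
        _ ≤ (y + (B + i)) ^ (B + k) := Nat.pow_le_pow_right (by omega) (by omega)
    have key1 : risingReal β y / (Nat.factorial y : ℝ) ≤ (((B + y - 1).choose y : ℕ) : ℝ) := by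
      rw [div_le_iff₀ hfac]
      calc risingReal β y ≤ ((B.ascFactorial y : ℕ) : ℝ) := hr1
        _ = (((B + y - 1).choose y : ℕ) : ℝ) * (Nat.factorial y : ℝ) := by
            rw [← Nat.cast_mul, hasc, Nat.mul_comm]
    have hdf0 : (0:ℝ) ≤ (((y + i).descFactorial k : ℕ) : ℝ) := by positivity
    calc risingReal β y * p ^ y / (Nat.factorial y : ℝ) * (((y + i).descFactorial k : ℕ) : ℝ)
        = (risingReal β y / (Nat.factorial y : ℝ)) * ((((y + i).descFactorial k : ℕ) : ℝ) * p ^ y) := by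
          ring
      _ ≤ (((B + y - 1).choose y : ℕ) : ℝ) * ((((y + i).descFactorial k : ℕ) : ℝ) * p ^ y) := by
          refine mul_le_mul_of_nonneg_right key1 (by positivity)
      _ = ((((B + y - 1).choose y * (y + i).descFactorial k : ℕ) : ℝ)) * p ^ y := by
          push_cast; ring
      _ ≤ (((y + (B + i) : ℕ) : ℝ)) ^ (B + k) * p ^ y := by
          refine mul_le_mul_of_nonneg_right ?_ (by positivity)
          exact_mod_cast hprod


lemma meixner_alt_zero (p α : ℝ) {n m : ℕ} (h : n < m) (y : ℕ) :
    ∑ i ∈ Finset.range (m + 1),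
      (-1 : ℝ) ^ i * (m.choose i : ℝ) * meixner p α n (y + i) = 0 := by
  simp only [meixner, Finset.mul_sum]
  rw [Finset.sum_comm]
  refine Finset.sum_eq_zero fun k hk => ?_
  simp only [Finset.mem_range] at hk
  have hkm : k < m := by omega
  have rearr : ∀ i ∈ Finset.range (m + 1),
      (-1 : ℝ) ^ i * (m.choose i : ℝ) *
        ((n.choose k : ℝ) * (1 - 1 / p) ^ ((k : ℤ) - (n : ℤ)) * risingReal (α + k) (n - k) *
          (((y + i).descFactorial k : ℕ) : ℝ))
      = ((n.choose k : ℝ) * (1 - 1 / p) ^ ((k : ℤ) - (n : ℤ)) * risingReal (α + k) (n - k)) *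
          ((-1 : ℝ) ^ i * (m.choose i : ℝ) * (((y + i).descFactorial k : ℕ) : ℝ)) := by
    intro i _
    ring
  rw [Finset.sum_congr rfl rearr, ← Finset.mul_sum, alt_desc_zero m k y hkm, mul_zero]

lemma summable_v_meixner (p α : ℝ) (hp0 : 0 < p) (hp1 : p < 1) (hα : 0 < α)
    (m n i : ℕ) :
    Summable (fun y : ℕ =>
      risingReal (α + m) y * p ^ y / (Nat.factorial y : ℝ) * meixner p α n (y + i)) := by
  have hβ : 0 < α + (m : ℝ) := by positivity
  have haux : ∀ k : ℕ, Summable (fun y : ℕ =>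
      risingReal (α + m) y * p ^ y / (Nat.factorial y : ℝ) *
        (((y + i).descFactorial k : ℕ) : ℝ)) := by
    intro k
    refine summable_aux' hp0 hp1 hβ (⌈α + (m : ℝ)⌉₊ + 1) ?_ (by omega) i k
    push_cast
    have := Nat.le_ceil (α + (m : ℝ))
    linarith
  have hsum : Summable (fun y : ℕ => ∑ k ∈ Finset.range (n + 1),
      ((n.choose k : ℝ) * (1 - 1 / p) ^ ((k : ℤ) - (n : ℤ)) * risingReal (α + k) (n - k)) *
        (risingReal (α + m) y * p ^ y / (Nat.factorial y : ℝ) *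
          (((y + i).descFactorial k : ℕ) : ℝ))) :=
    summable_sum fun k _ => ((haux k).mul_left _)
  refine hsum.congr fun y => ?_
  simp only [meixner, Finset.mul_sum]
  refine Finset.sum_congr rfl fun k _ => by ring

lemma meixner_key (p α : ℝ) (hp0 : 0 < p) (hp1 : p < 1) (hα : 0 < α)
    {n m : ℕ} (hnm : n < m) :
    ∑' j : ℕ,
        (risingReal α j * p ^ j * (1 - p) ^ α / (Nat.factorial j : ℝ)) *
          (meixner p α n j * meixner p α m j) = 0 := by
  have h1p : (1 : ℝ) < 1 / p := one_lt_one_div hp0 hp1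
  have hc : (1 : ℝ) - 1 / p ≠ 0 := ne_of_lt (by linarith)
  set K : ℝ := ((1 - 1 / p) ^ m)⁻¹ * risingReal α m * (1 - p) ^ α with hK
  set G : ℕ → ℕ → ℝ := fun i x =>
    (if i ≤ x then risingReal (α + m) (x - i) * p ^ (x - i) / (Nat.factorial (x - i) : ℝ)
     else 0) * meixner p α n x with hG
  have hpt : ∀ x : ℕ,
      (risingReal α x * p ^ x * (1 - p) ^ α / (Nat.factorial x : ℝ)) *
        (meixner p α n x * meixner p α m x)
      = ∑ i ∈ Finset.range (m + 1),
          (K * ((-1 : ℝ) ^ i * (m.choose i : ℝ))) * G i x := by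
    intro x
    have hw := weight_mul_meixner p α (ne_of_gt hp0) hc m x
    have e1 : (risingReal α x * p ^ x * (1 - p) ^ α / (Nat.factorial x : ℝ)) *
        (meixner p α n x * meixner p α m x)
        = ((risingReal α x * p ^ x * (1 - p) ^ α / (Nat.factorial x : ℝ)) *
            meixner p α m x) * meixner p α n x := by ring
    rw [e1, hw, Finset.mul_sum, Finset.sum_mul]
    refine Finset.sum_congr rfl fun i _ => ?_
    simp only [hG, hK]
    ring
  have hv : ∀ i : ℕ, Summable (fun y : ℕ =>
      risingReal (α + m) y * p ^ y / (Nat.factorial y : ℝ) * meixner p α n (y + i)) :=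
    fun i => summable_v_meixner p α hp0 hp1 hα m n i
  have hshift : ∀ i y : ℕ, G i (y + i)
      = risingReal (α + m) y * p ^ y / (Nat.factorial y : ℝ) * meixner p α n (y + i) := by
    intro i y
    simp only [hG, if_pos (Nat.le_add_left i y), Nat.add_sub_cancel]
  have hGs : ∀ i : ℕ, Summable (G i) := by
    intro i
    refine (summable_nat_add_iff i).1 (Summable.congr (hv i) fun y => (hshift i y).symm)
  calc ∑' x : ℕ, (risingReal α x * p ^ x * (1 - p) ^ α / (Nat.factorial x : ℝ)) *
          (meixner p α n x * meixner p α m x)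
      = ∑' x : ℕ, ∑ i ∈ Finset.range (m + 1),
          (K * ((-1 : ℝ) ^ i * (m.choose i : ℝ))) * G i x := tsum_congr hpt
    _ = ∑ i ∈ Finset.range (m + 1), ∑' x : ℕ,
          (K * ((-1 : ℝ) ^ i * (m.choose i : ℝ))) * G i x :=
        Summable.tsum_finsetSum fun i _ => (hGs i).mul_left _
    _ = ∑ i ∈ Finset.range (m + 1), (K * ((-1 : ℝ) ^ i * (m.choose i : ℝ))) *
          ∑' y : ℕ, risingReal (α + m) y * p ^ y / (Nat.factorial y : ℝ) *
            meixner p α n (y + i) := by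
        refine Finset.sum_congr rfl fun i _ => ?_
        rw [tsum_mul_left]
        congr 1
        rw [← Summable.sum_add_tsum_nat_add i (hGs i)]
        have hhead : ∑ x ∈ Finset.range i, G i x = 0 := by
          refine Finset.sum_eq_zero fun x hx => ?_
          simp only [Finset.mem_range] at hx
          simp only [hG, if_neg (by omega : ¬ i ≤ x), zero_mul]
        rw [hhead, zero_add]
        exact tsum_congr fun y => hshift i y
    _ = ∑ i ∈ Finset.range (m + 1), ∑' y : ℕ,
          (K * ((-1 : ℝ) ^ i * (m.choose i : ℝ))) *
            (risingReal (α + m) y * p ^ y / (Nat.factorial y : ℝ) * meixner p α n (y + i)) := by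
        refine Finset.sum_congr rfl fun i _ => (tsum_mul_left).symm
    _ = ∑' y : ℕ, ∑ i ∈ Finset.range (m + 1),
          (K * ((-1 : ℝ) ^ i * (m.choose i : ℝ))) *
            (risingReal (α + m) y * p ^ y / (Nat.factorial y : ℝ) * meixner p α n (y + i)) :=
        (Summable.tsum_finsetSum fun i _ => (hv i).mul_left _).symm
    _ = ∑' y : ℕ, (0 : ℝ) := by
        refine tsum_congr fun y => ?_
        have rearr : ∀ i ∈ Finset.range (m + 1),
            (K * ((-1 : ℝ) ^ i * (m.choose i : ℝ))) *
              (risingReal (α + m) y * p ^ y / (Nat.factorial y : ℝ) * meixner p α n (y + i))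
            = (K * (risingReal (α + m) y * p ^ y / (Nat.factorial y : ℝ))) *
                ((-1 : ℝ) ^ i * (m.choose i : ℝ) * meixner p α n (y + i)) := by
          intro i _
          ring
        rw [Finset.sum_congr rfl rearr, ← Finset.mul_sum, meixner_alt_zero p α hnm y, mul_zero]
    _ = 0 := tsum_zero


/-- orthogonality of the monic Meixner polynomials with respect to the
negative binomial distribution with parameters `0 < p < 1` and `α > 0`:
`E[M_n^{p,α}(X) M_m^{p,α}(X)] = 0` for `n ≠ m`. -/
theorem meixner_orthogonal (p α : ℝ) (hp0 : 0 < p) (hp1 : p < 1) (hα : 0 < α)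
    (n m : ℕ) (hnm : n ≠ m) :
    ∑' j : ℕ,
        (risingReal α j * p ^ j * (1 - p) ^ α / (Nat.factorial j : ℝ)) *
          (meixner p α n j * meixner p α m j)
      = 0 := by
  rcases lt_or_gt_of_ne hnm with h | h
  · exact meixner_key p α hp0 hp1 hα h
  · have e : ∀ j : ℕ,
        (risingReal α j * p ^ j * (1 - p) ^ α / (Nat.factorial j : ℝ)) *
          (meixner p α n j * meixner p α m j)
        = (risingReal α j * p ^ j * (1 - p) ^ α / (Nat.factorial j : ℝ)) *
            (meixner p α m j * meixner p α n j) := fun j => by ring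
    rw [tsum_congr e]
    exact meixner_key p α hp0 hp1 hα h
end
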